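/- arXiv:1808.10662 — 4 statements merged into one kernel-verified Lean document; each statement's English description precedes it below -/
import Mathlib

section
/- Let ε > 0 and let η : ℝ × ℝ → ℝ be smooth and satisfy the KdV equation ∂_t η + ∂_x η + (3/2) ε η ∂_x η + (1/6) ε ∂_x³ η = 0 at every point. Then at every point (x,t) one has the pointwise identity ∂_t[1/2 + ε η + ε² η²] + ∂_x[ε η + (7/4) ε² η² + (1/6) ε² ∂_x² η] = −3 ε³ η² ∂_x η − (1/3) ε³ η ∂_x³ η. -/
/-- Partial derivative with respect to the first (spatial) variable. -/
noncomputable def pdx (η : ℝ × ℝ → ℝ) : ℝ × ℝ → ℝ :=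
  fun p => deriv (fun x => η (x, p.2)) p.1

/-- Partial derivative with respect to the second (time) variable. -/
noncomputable def pdt (η : ℝ × ℝ → ℝ) : ℝ × ℝ → ℝ :=
  fun p => deriv (fun t => η (p.1, t)) p.2

lemma pdx_eq_fderiv {η : ℝ × ℝ → ℝ} (h : ContDiff ℝ (⊤ : ℕ∞) η) :
    pdx η = fun p => fderiv ℝ η p (1, 0) := by
  funext p
  have h1 : HasDerivAt (fun x : ℝ => ((x, p.2) : ℝ × ℝ)) ((1 : ℝ), (0 : ℝ)) p.1 :=
    (hasDerivAt_id p.1).prodMk (hasDerivAt_const p.1 p.2)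
  have h2 := ((h.differentiable (by simp) (p.1, p.2)).hasFDerivAt.comp_hasDerivAt p.1 h1)
  simpa [pdx, Function.comp_def] using h2.deriv

lemma pdx_contDiff {η : ℝ × ℝ → ℝ} (h : ContDiff ℝ (⊤ : ℕ∞) η) : ContDiff ℝ (⊤ : ℕ∞) (pdx η) := by
  rw [pdx_eq_fderiv h]
  exact (h.fderiv_right (by simp)).clm_apply contDiff_const

/-- Pointwise identity behind the approximate energy balance for the KdV equation
(energy normalized with the bed as reference level). -/
theorem kdv_energy_pointwise_identity (ε : ℝ) (hε : 0 < ε)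
    (η : ℝ × ℝ → ℝ) (hsmooth : ContDiff ℝ (⊤ : ℕ∞) η)
    (hKdV : ∀ p : ℝ × ℝ,
      pdt η p + pdx η p + (3/2) * ε * η p * pdx η p
        + (1/6) * ε * pdx (pdx (pdx η)) p = 0) :
    ∀ x t : ℝ,
      pdt (fun p => 1/2 + ε * η p + ε^2 * (η p)^2) (x, t)
        + pdx (fun p => ε * η p + (7/4) * ε^2 * (η p)^2 + (1/6) * ε^2 * pdx (pdx η) p) (x, t)
      = -3 * ε^3 * (η (x, t))^2 * pdx η (x, t)
        - (1/3) * ε^3 * η (x, t) * pdx (pdx (pdx η)) (x, t) := by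
  intro x t
  have hxx : ContDiff ℝ (⊤ : ℕ∞) (pdx (pdx η)) := pdx_contDiff (pdx_contDiff hsmooth)
  -- time slice
  have hfd : DifferentiableAt ℝ (fun s : ℝ => η (x, s)) t :=
    ((hsmooth.comp ((contDiff_const (c := x)).prodMk contDiff_id)).differentiable (by simp) t)
  have hf : HasDerivAt (fun s : ℝ => η (x, s)) (pdt η (x, t)) t := hfd.hasDerivAt
  -- space slices
  have hgd : DifferentiableAt ℝ (fun s : ℝ => η (s, t)) x :=
    ((hsmooth.comp (contDiff_id.prodMk (contDiff_const (c := t)))).differentiable (by simp) x)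
  have hg : HasDerivAt (fun s : ℝ => η (s, t)) (pdx η (x, t)) x := hgd.hasDerivAt
  have hg2d : DifferentiableAt ℝ (fun s : ℝ => pdx (pdx η) (s, t)) x :=
    ((hxx.comp (contDiff_id.prodMk (contDiff_const (c := t)))).differentiable (by simp) x)
  have hg2 : HasDerivAt (fun s : ℝ => pdx (pdx η) (s, t)) (pdx (pdx (pdx η)) (x, t)) x :=
    hg2d.hasDerivAt
  have hF : HasDerivAt
      (fun s : ℝ => 1/2 + ε * η (x, s) + ε^2 * (η (x, s))^2)
      (ε * pdt η (x, t) + ε^2 * (((2 : ℕ) : ℝ) * η (x, t) ^ 1 * pdt η (x, t))) t := by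
    simpa [Pi.add_def] using (((hasDerivAt_const t (1/2 : ℝ)).add (hf.const_mul ε)).add ((hf.pow 2).const_mul (ε^2)))
  have hG : HasDerivAt
      (fun s : ℝ => ε * η (s, t) + (7/4) * ε^2 * (η (s, t))^2 + (1/6) * ε^2 * pdx (pdx η) (s, t))
      (ε * pdx η (x, t) + (7/4) * ε^2 * (((2 : ℕ) : ℝ) * η (x, t) ^ 1 * pdx η (x, t))
        + (1/6) * ε^2 * pdx (pdx (pdx η)) (x, t)) x := by
    simpa [Pi.add_def] using (((hg.const_mul ε).add ((hg.pow 2).const_mul ((7/4) * ε^2))).add (hg2.const_mul ((1/6) * ε^2)))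
  have h1 : pdt (fun p => 1/2 + ε * η p + ε^2 * (η p)^2) (x, t)
      = ε * pdt η (x, t) + ε^2 * (((2 : ℕ) : ℝ) * η (x, t) ^ 1 * pdt η (x, t)) := hF.deriv
  have h2 : pdx (fun p => ε * η p + (7/4) * ε^2 * (η p)^2 + (1/6) * ε^2 * pdx (pdx η) p) (x, t)
      = ε * pdx η (x, t) + (7/4) * ε^2 * (((2 : ℕ) : ℝ) * η (x, t) ^ 1 * pdx η (x, t))
        + (1/6) * ε^2 * pdx (pdx (pdx η)) (x, t) := hG.deriv
  rw [h1, h2]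
  push_cast
  linear_combination (ε + 2 * ε^2 * η (x, t)) * hKdV (x, t)
end

section
/- Let ε > 0 and let η : ℝ × ℝ → ℝ be smooth and satisfy the KdV equation ∂_t η + ∂_x η + (3/2) ε η ∂_x η + (1/6) ε ∂_x³ η = 0 at every point. Set S := (3/2) η ∂_x η + (1/6) ∂_x³ η (so that ∂_t η + ∂_x η = −ε S). Then at every point (x,t) one has the pointwise identity ∂_t[η² + (1/4) ε η³ + (1/6) ε η ∂_x² η + (1/6) ε (∂_x η)²] + ∂_x[η² + (5/4) ε η³ + (1/2) ε η ∂_x² η] = −ε² [ (3/4) η² S + (1/6) (∂_x² η) S + (1/6) η ∂_x² S + (1/3) (∂_x η)(∂_x S) ]; in particular every term on the right-hand side carries a factor ε². -/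
noncomputable def D1 (f : ℝ × ℝ → ℝ) : ℝ × ℝ → ℝ := fun p => fderiv ℝ f p (1, 0)
noncomputable def D2 (f : ℝ × ℝ → ℝ) : ℝ × ℝ → ℝ := fun p => fderiv ℝ f p (0, 1)

lemma hasDerivAt_fst' {f : ℝ × ℝ → ℝ} (hf : Differentiable ℝ f) (x t : ℝ) :
    HasDerivAt (fun x' => f (x', t)) (D1 f (x, t)) x := by
  have h : HasDerivAt (fun x' : ℝ => ((x' : ℝ), t)) ((1 : ℝ), (0 : ℝ)) x :=
    (hasDerivAt_id x).prodMk (hasDerivAt_const x t)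
  exact (hf (x, t)).hasFDerivAt.comp_hasDerivAt x h

lemma hasDerivAt_snd' {f : ℝ × ℝ → ℝ} (hf : Differentiable ℝ f) (x t : ℝ) :
    HasDerivAt (fun t' => f (x, t')) (D2 f (x, t)) t := by
  have h : HasDerivAt (fun t' : ℝ => ((x : ℝ), (t' : ℝ))) ((0 : ℝ), (1 : ℝ)) t :=
    (hasDerivAt_const t x).prodMk (hasDerivAt_id t)
  exact (hf (x, t)).hasFDerivAt.comp_hasDerivAt t h

lemma pdx_eq {f : ℝ × ℝ → ℝ} (hf : Differentiable ℝ f) : pdx f = D1 f := by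
  funext p
  simpa [pdx] using (hasDerivAt_fst' hf p.1 p.2).deriv

lemma pdt_eq {f : ℝ × ℝ → ℝ} (hf : Differentiable ℝ f) : pdt f = D2 f := by
  funext p
  simpa [pdt] using (hasDerivAt_snd' hf p.1 p.2).deriv

lemma D1_contDiff {f : ℝ × ℝ → ℝ} (hf : ContDiff ℝ (⊤ : ℕ∞) f) : ContDiff ℝ (⊤ : ℕ∞) (D1 f) :=
  (hf.fderiv_right (by simp)).clm_apply contDiff_const

lemma D_apply_const {f : ℝ × ℝ → ℝ} (hf : ContDiff ℝ (⊤ : ℕ∞) f) (v w : ℝ × ℝ) (p : ℝ × ℝ) :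
    fderiv ℝ (fun q => fderiv ℝ f q v) p w = fderiv ℝ (fderiv ℝ f) p w v := by
  have hd : DifferentiableAt ℝ (fderiv ℝ f) p :=
    ((hf.fderiv_right (m := 1) (WithTop.coe_le_coe.mpr le_top)).differentiable one_ne_zero) p
  rw [fderiv_clm_apply hd (differentiableAt_const v)]
  simp

lemma D_comm {f : ℝ × ℝ → ℝ} (hf : ContDiff ℝ (⊤ : ℕ∞) f) : D1 (D2 f) = D2 (D1 f) := by
  funext p
  have hd : DifferentiableAt ℝ (fderiv ℝ f) p :=
    ((hf.fderiv_right (m := 1) (WithTop.coe_le_coe.mpr le_top)).differentiable one_ne_zero) p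
  have hsym := second_derivative_symmetric (f := f) (f' := fderiv ℝ f)
    (f'' := fderiv ℝ (fderiv ℝ f) p) (x := p)
    (fun y => ((hf.differentiable (by simp)) y).hasFDerivAt) hd.hasFDerivAt
  show fderiv ℝ (fun q => fderiv ℝ f q (0, 1)) p (1, 0)
      = fderiv ℝ (fun q => fderiv ℝ f q (1, 0)) p (0, 1)
  rw [D_apply_const hf _ _ p, D_apply_const hf _ _ p, hsym]

lemma D1_neg_add_mul {g h : ℝ × ℝ → ℝ} (ε : ℝ)
    (hg : Differentiable ℝ g) (hh : Differentiable ℝ h) :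
    D1 (fun p => -(g p + ε * h p)) = fun p => -(D1 g p + ε * D1 h p) := by
  funext p
  have H : HasFDerivAt (fun p => -(g p + ε * h p))
      (-(fderiv ℝ g p + ε • fderiv ℝ h p)) p :=
    ((hg p).hasFDerivAt.add ((hh p).hasFDerivAt.const_mul ε)).neg
  simp only [D1]
  rw [H.fderiv]
  simp

/-- Pointwise identity behind the approximate energy balance for the KdV equation,
with the potential energy normalized so that the undisturbed state has zero energy.
Here `S = (3/2) η ∂ₓη + (1/6) ∂ₓ³η`, so that `∂ₜη + ∂ₓη = -ε S`. -/
theorem kdv_energy_star_pointwise_identity (ε : ℝ) (hε : 0 < ε)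
    (η : ℝ × ℝ → ℝ) (hsmooth : ContDiff ℝ (⊤ : ℕ∞) η)
    (hKdV : ∀ p : ℝ × ℝ,
      pdt η p + pdx η p + (3/2) * ε * η p * pdx η p
        + (1/6) * ε * pdx (pdx (pdx η)) p = 0)
    (S : ℝ × ℝ → ℝ)
    (hS : S = fun p => (3/2) * η p * pdx η p + (1/6) * pdx (pdx (pdx η)) p) :
    ∀ x t : ℝ,
      pdt (fun p => (η p)^2 + (1/4) * ε * (η p)^3 + (1/6) * ε * η p * pdx (pdx η) p
            + (1/6) * ε * (pdx η p)^2) (x, t)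
        + pdx (fun p => (η p)^2 + (5/4) * ε * (η p)^3 + (1/2) * ε * η p * pdx (pdx η) p) (x, t)
      = -ε^2 * ((3/4) * (η (x, t))^2 * S (x, t)
          + (1/6) * pdx (pdx η) (x, t) * S (x, t)
          + (1/6) * η (x, t) * pdx (pdx S) (x, t)
          + (1/3) * pdx η (x, t) * pdx S (x, t)) := by
  intro x t
  have hηd : Differentiable ℝ η := hsmooth.differentiable (by simp)
  have hc1 : ContDiff ℝ (⊤ : ℕ∞) (D1 η) := D1_contDiff hsmooth
  have hc2 : ContDiff ℝ (⊤ : ℕ∞) (D1 (D1 η)) := D1_contDiff hc1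
  have hc3 : ContDiff ℝ (⊤ : ℕ∞) (D1 (D1 (D1 η))) := D1_contDiff hc2
  have e1 : pdx η = D1 η := pdx_eq hηd
  have e2 : pdx (D1 η) = D1 (D1 η) := pdx_eq (hc1.differentiable (by simp))
  have e3 : pdx (D1 (D1 η)) = D1 (D1 (D1 η)) := pdx_eq (hc2.differentiable (by simp))
  rw [e1, e2, e3] at hS
  have hScd : ContDiff ℝ (⊤ : ℕ∞) S := by
    rw [hS]
    exact ((contDiff_const.mul hsmooth).mul hc1).add (contDiff_const.mul hc3)
  have hS1cd : ContDiff ℝ (⊤ : ℕ∞) (D1 S) := D1_contDiff hScd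
  have hS2cd : ContDiff ℝ (⊤ : ℕ∞) (D1 (D1 S)) := D1_contDiff hS1cd
  have eS : pdx S = D1 S := pdx_eq (hScd.differentiable (by simp))
  have eS2 : pdx (D1 S) = D1 (D1 S) := pdx_eq (hS1cd.differentiable (by simp))
  -- KdV for the time derivative of η
  have hKdV' : D2 η = fun p => -(D1 η p + ε * S p) := by
    funext p
    have h := hKdV p
    rw [pdt_eq hηd, e1, e2, e3] at h
    rw [hS]
    linear_combination h
  -- time derivative of D1 η
  have htu1 : D2 (D1 η) = fun p => -(D1 (D1 η) p + ε * D1 S p) := by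
    rw [← D_comm hsmooth, hKdV']
    exact D1_neg_add_mul ε (hc1.differentiable (by simp)) (hScd.differentiable (by simp))
  -- time derivative of D1 (D1 η)
  have htu2 : D2 (D1 (D1 η)) = fun p => -(D1 (D1 (D1 η)) p + ε * D1 (D1 S) p) := by
    rw [← D_comm hc1, htu1]
    exact D1_neg_add_mul ε (hc2.differentiable (by simp)) (hS1cd.differentiable (by simp))
  rw [e1, e2, eS, eS2]
  have h0 := hasDerivAt_snd' hηd x t
  have h1 := hasDerivAt_snd' (hc1.differentiable (by simp)) x t
  have h2 := hasDerivAt_snd' (hc2.differentiable (by simp)) x t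
  have g0 := hasDerivAt_fst' hηd x t
  have g2 := hasDerivAt_fst' (hc2.differentiable (by simp)) x t
  have hF := (((h0.pow 2).add ((h0.pow 3).const_mul ((1/4) * ε))).add
      ((h0.const_mul ((1/6) * ε)).mul h2)).add ((h1.pow 2).const_mul ((1/6) * ε))
  have hG := ((g0.pow 2).add ((g0.pow 3).const_mul ((5/4) * ε))).add
      ((g0.const_mul ((1/2) * ε)).mul g2)
  have key1 := hF.deriv
  have key2 := hG.deriv
  simp only [pdt, pdx]
  erw [key1, key2]
  rw [hKdV', htu1, htu2, hS]
  ring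
end

section
/- Let ε > 0 and let η : ℝ × [t₁, t₂] → ℝ be such that for each t the map x ↦ η(x,t) is a Schwartz function on ℝ, the map t ↦ η(·,t) is continuously differentiable as a curve in the Schwartz space, and η satisfies the KdV equation ∂_t η + ∂_x η + (3/2) ε η ∂_x η + (1/6) ε ∂_x³ η = 0 at every point. Then ∫_ℝ η(x, t₁)² dx = ∫_ℝ η(x, t₂)² dx. -/
/-!
Multiplying the KdV equation by `2η` turns it into the conservation law `∂ₜ(η²) + ∂ₓΦ = 0`
with flux `Φ = η² + εη³ + (ε/3) η ∂ₓ²η - (ε/6) (∂ₓη)²`, which is again a Schwartz function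
of `x`; hence `∫ ∂ₜ(η²) dx = 0` at every time. Integrating over `[t₁, t₂]` and exchanging the
two integrals (Fubini) gives the conservation of `∫ η² dx`. The integrability on
`[t₁, t₂] × ℝ` that Fubini needs comes from compactness: a continuous curve in Schwartz space
satisfies a uniform decay bound `|∂ₜη| ≤ C (1 + x²)⁻¹`, and by the mean value theorem `η` is
then uniformly bounded and uniformly Lipschitz in time, hence jointly continuous.
-/

open MeasureTheory SchwartzMap Set Function
open scoped NNReal

namespace SchwartzMap

variable {E F : Type*} [NormedAddCommGroup E] [NormedSpace ℝ E]
  [NormedAddCommGroup F] [NormedSpace ℝ F]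

instance instContinuousEval : ContinuousEval 𝓢(E, F) E F :=
  ContinuousEval.of_continuous_forget (toBoundedContinuousFunctionCLM ℝ E F).continuous

theorem one_add_sq_mul_norm_le (f : 𝓢(ℝ, F)) (x : ℝ) :
    (1 + x ^ 2) * ‖f x‖ ≤ SchwartzMap.seminorm ℝ 0 0 f + SchwartzMap.seminorm ℝ 2 0 f := by
  have h0 := norm_le_seminorm ℝ f x
  have h2 := norm_pow_mul_le_seminorm ℝ f 2 x
  rw [Real.norm_eq_abs, sq_abs] at h2
  linarith

theorem _root_.IsCompact.exists_norm_le_mul_inv_one_add_sq {X : Type*} [TopologicalSpace X]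
    {K : Set X} (hK : IsCompact K) {f : X → 𝓢(ℝ, F)} (hf : ContinuousOn f K) :
    ∃ C : ℝ≥0, ∀ t ∈ K, ∀ x, ‖f t x‖ ≤ C * (1 + x ^ 2)⁻¹ := by
  have hq : Continuous fun g : 𝓢(ℝ, F) =>
      SchwartzMap.seminorm ℝ 0 0 g + SchwartzMap.seminorm ℝ 2 0 g :=
    ((schwartz_withSeminorms ℝ ℝ F).continuous_seminorm (0, 0)).add
      ((schwartz_withSeminorms ℝ ℝ F).continuous_seminorm (2, 0))
  obtain ⟨C, hC⟩ := hK.exists_bound_of_continuousOn (hq.comp_continuousOn hf)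
  refine ⟨C.toNNReal, fun t ht x => ?_⟩
  rw [← div_eq_mul_inv, le_div_iff₀ (by positivity), mul_comm]
  calc (1 + x ^ 2) * ‖f t x‖
        ≤ SchwartzMap.seminorm ℝ 0 0 (f t) + SchwartzMap.seminorm ℝ 2 0 (f t) :=
          one_add_sq_mul_norm_le (f t) x
    _ ≤ C := (le_abs_self _).trans (hC t ht)
    _ ≤ C.toNNReal := Real.le_coe_toNNReal C

end SchwartzMap

theorem integral_eq_integral_of_hasDerivAt_of_integral_eq_zero {α E : Type*}
    [MeasurableSpace α] {μ : Measure α} [SFinite μ] [NormedAddCommGroup E] [NormedSpace ℝ E]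
    [CompleteSpace E] {u u' : ℝ → α → E} {a b : ℝ} (hab : a ≤ b)
    (hu : ∀ t ∈ Icc a b, ∀ x, HasDerivAt (fun s => u s x) (u' t x) t)
    (hu' : Integrable (uncurry u') ((volume.restrict (Ioc a b)).prod μ))
    (hzero : ∀ t ∈ Ioc a b, ∫ x, u' t x ∂μ = 0)
    (ha : Integrable (u a) μ) (hb : Integrable (u b) μ) :
    ∫ x, u a x ∂μ = ∫ x, u b x ∂μ := by
  have hftc : ∀ᵐ x ∂μ, u b x - u a x = ∫ t in Ioc a b, u' t x := by
    filter_upwards [hu'.prod_left_ae] with x hx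
    rw [← intervalIntegral.integral_of_le hab]
    exact (intervalIntegral.integral_eq_sub_of_hasDerivAt
      (fun t ht => hu t (uIcc_of_le hab ▸ ht) x)
      ((intervalIntegrable_iff_integrableOn_Ioc_of_le hab).2 hx)).symm
  have hdiff : ∫ x, (u b x - u a x) ∂μ = 0 := calc
    _ = ∫ x, (∫ t in Ioc a b, u' t x) ∂μ := integral_congr_ae hftc
    _ = ∫ t in Ioc a b, (∫ x, u' t x ∂μ) := (integral_integral_swap hu').symm
    _ = 0 := setIntegral_eq_zero_of_forall_eq_zero hzero
  rw [integral_sub hb ha, sub_eq_zero] at hdiff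
  exact hdiff.symm

theorem integrable_uncurry_mul_of_hasDerivAt {a b : ℝ} {η ηt : ℝ → 𝓢(ℝ, ℝ)} (hab : a ≤ b)
    (hderiv : ∀ t ∈ Icc a b, ∀ x, HasDerivAt (fun s => η s x) (ηt t x) t)
    (hcont : ContinuousOn ηt (Icc a b)) :
    Integrable (uncurry fun t x => η t x * ηt t x)
      ((volume.restrict (Ioc a b)).prod volume) := by
  obtain ⟨C, hC⟩ := isCompact_Icc.exists_norm_le_mul_inv_one_add_sq hcont
  have hC' : ∀ t ∈ Icc a b, ∀ x, ‖ηt t x‖ ≤ C := fun t ht x =>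
    (hC t ht x).trans (mul_le_of_le_one_right C.2
      (inv_le_one_of_one_le₀ (le_add_of_nonneg_right (sq_nonneg x))))
  have hlip : ∀ x, LipschitzOnWith C (fun t => η t x) (Icc a b) := fun x =>
    (convex_Icc a b).lipschitzOnWith_of_nnnorm_hasDerivWithin_le
      (fun t ht => (hderiv t ht x).hasDerivWithinAt) (fun t ht => hC' t ht x)
  set M := SchwartzMap.seminorm ℝ 0 0 (η a) + C * (b - a)
  have hM : ∀ t ∈ Icc a b, ∀ x, ‖η t x‖ ≤ M := fun t ht x => calc
    ‖η t x‖ ≤ ‖η a x‖ + dist (η t x) (η a x) :=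
      dist_eq_norm (η t x) _ ▸ norm_le_norm_add_norm_sub' _ _
    _ ≤ SchwartzMap.seminorm ℝ 0 0 (η a) + C * dist t a :=
      add_le_add (norm_le_seminorm ℝ _ x) ((hlip x).dist_le_mul t ht a (left_mem_Icc.2 hab))
    _ ≤ M := by
      rw [Real.dist_eq, abs_of_nonneg (sub_nonneg.2 ht.1)]
      exact add_le_add_right (mul_le_mul_of_nonneg_left (sub_le_sub_right ht.2 a) C.2) _
  have hjoint : ContinuousOn (uncurry fun t x => η t x * ηt t x) (Icc a b ×ˢ univ) :=
    (continuousOn_prod_of_continuousOn_lipschitzOnWith (fun p : ℝ × ℝ => η p.1 p.2) C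
      (fun t _ => (η t).continuous.continuousOn) (fun x _ => hlip x)).mul
      ((hcont.comp continuousOn_fst fun p hp => hp.1).eval continuousOn_snd)
  have hμ : (volume.restrict (Ioc a b)).prod (volume : Measure ℝ)
      = (volume.prod volume).restrict (Ioc a b ×ˢ univ) := by
    rw [← Measure.prod_restrict, Measure.restrict_univ]
  have hbound : Integrable (fun p : ℝ × ℝ => 1 * (M * C * (1 + p.2 ^ 2)⁻¹))
      ((volume.restrict (Ioc a b)).prod volume) :=
    (integrable_const 1).mul_prod (integrable_inv_one_add_sq.const_mul _)
  have hIoc : MeasurableSet (Ioc a b ×ˢ (univ : Set ℝ)) :=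
    measurableSet_Ioc.prod MeasurableSet.univ
  rw [hμ] at hbound ⊢
  refine hbound.mono'
    ((hjoint.mono (prod_mono Ioc_subset_Icc_self subset_rfl)).aestronglyMeasurable hIoc)
    (ae_restrict_of_forall_mem hIoc ?_)
  rintro ⟨t, x⟩ ⟨ht, -⟩
  replace ht := Ioc_subset_Icc_self ht
  rw [uncurry_apply_pair, one_mul, norm_mul, mul_assoc]
  exact mul_le_mul (hM _ ht _) (hC _ ht _) (norm_nonneg _) ((norm_nonneg _).trans (hM _ ht x))

section KdV

variable (ε : ℝ)

noncomputable def kdvL2Flux (g : 𝓢(ℝ, ℝ)) : 𝓢(ℝ, ℝ) :=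
  let m := pairing (ContinuousLinearMap.mul ℝ ℝ)
  let g' := derivCLM ℝ ℝ g
  m g g + ε • m (m g g) g + (ε / 3) • m g (derivCLM ℝ ℝ g') - (ε / 6) • m g' g'

theorem hasDerivAt_kdvL2Flux (g : 𝓢(ℝ, ℝ)) (x : ℝ) :
    HasDerivAt (kdvL2Flux ε g) (2 * g x * (deriv g x + 3 / 2 * ε * g x * deriv g x
      + 1 / 6 * ε * deriv^[3] g x)) x := by
  have hcoe : ∀ f : 𝓢(ℝ, ℝ), ⇑(derivCLM ℝ ℝ f) = deriv f := fun f =>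
    funext (derivCLM_apply ℝ f)
  have h0 := g.hasDerivAt x
  have h1 := (derivCLM ℝ ℝ g).hasDerivAt x
  have h2 := (derivCLM ℝ ℝ (derivCLM ℝ ℝ g)).hasDerivAt x
  simp only [hcoe] at h1 h2
  have hflux : ⇑(kdvL2Flux ε g) = fun y => g y * g y + ε * (g y * g y * g y)
      + ε / 3 * (g y * deriv (deriv g) y) - ε / 6 * (deriv g y * deriv g y) := by
    ext y
    simp [kdvL2Flux, hcoe]
  rw [hflux]
  refine ((((h0.mul h0).add (((h0.mul h0).mul h0).const_mul ε)).add
    ((h0.mul h2).const_mul (ε / 3))).sub ((h1.mul h1).const_mul (ε / 6))).congr_deriv ?_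
  simp only [iterate_succ_apply', iterate_zero_apply, Pi.mul_apply]
  ring

theorem integral_mul_eq_zero_of_kdv (g w : 𝓢(ℝ, ℝ))
    (hkdv : ∀ x, w x + deriv g x + 3 / 2 * ε * g x * deriv g x
      + 1 / 6 * ε * deriv^[3] g x = 0) :
    ∫ x, g x * w x = 0 := by
  have hflux : ∀ x, HasDerivAt (kdvL2Flux ε g) (-2 * (g x * w x)) x := fun x => by
    convert hasDerivAt_kdvL2Flux ε g x using 1
    linear_combination (-2 * g x) * hkdv x
  have := integral_eq_zero_of_hasDerivAt_of_integrable hflux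
    ((pairing (ContinuousLinearMap.mul ℝ ℝ) g w).integrable.const_mul (-2))
    (kdvL2Flux ε g).integrable
  rwa [integral_const_mul, mul_eq_zero, or_iff_right (by norm_num)] at this

end KdV

theorem kdv_L2_invariant_conserved_general (ε t₁ t₂ : ℝ) (ht : t₁ ≤ t₂)
    (η : ℝ → SchwartzMap ℝ ℝ) (ηt : ℝ → SchwartzMap ℝ ℝ)
    (hderiv : ∀ t ∈ Set.Icc t₁ t₂, ∀ x : ℝ, HasDerivAt (fun s => η s x) (ηt t x) t)
    (hcont : ContinuousOn ηt (Set.Icc t₁ t₂))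
    (hKdV : ∀ t ∈ Set.Icc t₁ t₂, ∀ x : ℝ,
      ηt t x + deriv (fun y => η t y) x
        + (3/2) * ε * η t x * deriv (fun y => η t y) x
        + (1/6) * ε * deriv^[3] (fun y => η t y) x = 0) :
    ∫ x : ℝ, (η t₁ x)^2 = ∫ x : ℝ, (η t₂ x)^2 := by
  have hsq : ∀ t, Integrable fun x => η t x ^ 2 := fun t => by
    simp only [sq]
    exact (pairing (ContinuousLinearMap.mul ℝ ℝ) (η t) (η t)).integrable
  refine integral_eq_integral_of_hasDerivAt_of_integral_eq_zero ht
    (u' := fun t x => 2 * (η t x * ηt t x))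
    (fun t hs x => by simpa [mul_assoc] using (hderiv t hs x).pow 2)
    ((integrable_uncurry_mul_of_hasDerivAt ht hderiv hcont).const_mul 2)
    (fun t hs => ?_) (hsq t₁) (hsq t₂)
  rw [integral_const_mul, integral_mul_eq_zero_of_kdv ε _ _ (hKdV t (Ioc_subset_Icc_self hs)),
    mul_zero]

/-- Conservation of the second classical invariant `∫ η² dx` for Schwartz-class solutions
of the KdV equation on a time interval `[t₁, t₂]`.  The solution is given as a curve
`η : ℝ → 𝓢(ℝ, ℝ)` in Schwartz space which is continuously differentiable in time: its
pointwise time derivative `ηt t` is again a Schwartz function for each `t ∈ [t₁, t₂]`,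
and `t ↦ ηt t` is continuous into Schwartz space. -/
theorem kdv_L2_invariant_conserved (ε t₁ t₂ : ℝ) (hε : 0 < ε) (ht : t₁ ≤ t₂)
    (η : ℝ → SchwartzMap ℝ ℝ) (ηt : ℝ → SchwartzMap ℝ ℝ)
    (hderiv : ∀ t ∈ Set.Icc t₁ t₂, ∀ x : ℝ, HasDerivAt (fun s => η s x) (ηt t x) t)
    (hcont : ContinuousOn ηt (Set.Icc t₁ t₂))
    (hKdV : ∀ t ∈ Set.Icc t₁ t₂, ∀ x : ℝ,
      ηt t x + deriv (fun y => η t y) x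
        + (3/2) * ε * η t x * deriv (fun y => η t y) x
        + (1/6) * ε * deriv^[3] (fun y => η t y) x = 0) :
    ∫ x : ℝ, (η t₁ x)^2 = ∫ x : ℝ, (η t₂ x)^2 :=
  kdv_L2_invariant_conserved_general ε t₁ t₂ ht η ηt hderiv hcont hKdV
end

section
/- Let ε > 0 and let η : ℝ × [t₁, t₂] → ℝ be such that for each t the map x ↦ η(x,t) is a Schwartz function on ℝ, the map t ↦ η(·,t) is continuously differentiable as a curve in the Schwartz space, and η satisfies the KdV equation ∂_t η + ∂_x η + (3/2) ε η ∂_x η + (1/6) ε ∂_x³ η = 0 at every point. Then ∫_ℝ ( (1/3)(∂_x η(x,t₁))² − η(x,t₁)³ ) dx = ∫_ℝ ( (1/3)(∂_x η(x,t₂))² − η(x,t₂)³ ) dx. -/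
/-!
Along a solution, the density `(1/3)(∂ₓη)² − η³` changes at the rate
`(2/3) ∂ₓη ∂ₓ∂ₜη − 3 η² ∂ₜη`, and modulo the KdV equation this is the `x`-derivative of an
explicit flux which is a polynomial in `η, ∂ₓη, ∂ₓ²η, ∂ₜη`, hence a Schwartz function; so its
integral over the line vanishes. Differentiating under the integral sign needs `∂ₜ∂ₓη = ∂ₓ∂ₜη`,
which follows from `η(s) = η(t₁) + ∫_{t₁}^s ∂ₜη`, and bounds `(1 + x²) |·| ≤ C` uniform in time:
for `∂ₜη` and `∂ₓ∂ₜη` they come from continuity into Schwartz space on a compact time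
interval, for `η` and `∂ₓη` from the mean value inequality.
-/

open MeasureTheory SchwartzMap Set Filter Topology

def DecaysUniformlyOn {ι : Type*} (f : ι → ℝ → ℝ) (s : Set ι) : Prop :=
  ∃ C, ∀ t ∈ s, ∀ x, (1 + x ^ 2) * |f t x| ≤ C

namespace DecaysUniformlyOn

variable {ι : Type*} {f g : ι → ℝ → ℝ} {s : Set ι}

theorem exists_abs_le (hf : DecaysUniformlyOn f s) : ∃ C, ∀ t ∈ s, ∀ x, |f t x| ≤ C := by
  obtain ⟨C, hC⟩ := hf
  exact ⟨C, fun t ht x =>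
    (le_mul_of_one_le_left (abs_nonneg _) (le_add_of_nonneg_right (sq_nonneg x))).trans
      (hC t ht x)⟩

theorem exists_integrable_bound (hf : DecaysUniformlyOn f s) :
    ∃ bound : ℝ → ℝ, Integrable bound ∧ ∀ t ∈ s, ∀ x, ‖f t x‖ ≤ bound x := by
  obtain ⟨C, hC⟩ := hf
  refine ⟨fun x => C * (1 + x ^ 2)⁻¹, integrable_inv_one_add_sq.const_mul C, fun t ht x => ?_⟩
  dsimp only
  rw [Real.norm_eq_abs, ← div_eq_mul_inv, le_div_iff₀ (by positivity), mul_comm]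
  exact hC t ht x

theorem sub (hf : DecaysUniformlyOn f s) (hg : DecaysUniformlyOn g s) :
    DecaysUniformlyOn (fun t x => f t x - g t x) s := by
  obtain ⟨C, hC⟩ := hf
  obtain ⟨D, hD⟩ := hg
  refine ⟨C + D, fun t ht x => ?_⟩
  nlinarith [abs_sub (f t x) (g t x), hC t ht x, hD t ht x, sq_nonneg x]

theorem const_mul (c : ℝ) (hf : DecaysUniformlyOn f s) :
    DecaysUniformlyOn (fun t x => c * f t x) s := by
  obtain ⟨C, hC⟩ := hf
  refine ⟨|c| * C, fun t ht x => ?_⟩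
  rw [abs_mul, mul_left_comm]
  exact mul_le_mul_of_nonneg_left (hC t ht x) (abs_nonneg c)

theorem mul (hf : DecaysUniformlyOn f s) (hg : DecaysUniformlyOn g s) :
    DecaysUniformlyOn (fun t x => f t x * g t x) s := by
  obtain ⟨C, hC⟩ := hf
  obtain ⟨D, hD⟩ := hg.exists_abs_le
  refine ⟨C * D, fun t ht x => ?_⟩
  have hC₀ : 0 ≤ C := le_trans (by positivity) (hC t ht x)
  rw [abs_mul, ← mul_assoc]
  exact mul_le_mul (hC t ht x) (hD t ht x) (abs_nonneg _) hC₀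

theorem pow (hf : DecaysUniformlyOn f s) {n : ℕ} (hn : n ≠ 0) :
    DecaysUniformlyOn (fun t x => f t x ^ n) s := by
  induction n with
  | zero => exact absurd rfl hn
  | succ n ih =>
    rcases eq_or_ne n 0 with rfl | hn
    · simpa using hf
    · simpa only [pow_succ] using (ih hn).mul hf

theorem of_hasDerivWithinAt {F F' : ℝ → ℝ → ℝ} {a b : ℝ}
    (hF : ∀ t ∈ Icc a b, ∀ x, HasDerivWithinAt (F · x) (F' t x) (Icc a b) t)
    (ha : DecaysUniformlyOn F {a}) (hF' : DecaysUniformlyOn F' (Icc a b)) :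
    DecaysUniformlyOn F (Icc a b) := by
  obtain ⟨C₀, hC₀⟩ := ha
  obtain ⟨C, hC⟩ := hF'
  refine ⟨C₀ + C * (b - a), fun t ht x => ?_⟩
  have hw : 0 < 1 + x ^ 2 := by positivity
  have hC_nonneg : 0 ≤ C := le_trans (by positivity) (hC t ht x)
  have hmvt : |F t x - F a x| ≤ C / (1 + x ^ 2) * (t - a) :=
    norm_image_sub_le_of_norm_deriv_le_segment' (fun τ hτ => hF τ hτ x)
      (fun τ hτ => (le_div_iff₀' hw).2 (hC τ (Ico_subset_Icc_self hτ) x)) t ht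
  have hincr : (1 + x ^ 2) * |F t x - F a x| ≤ C * (b - a) := by
    rw [div_mul_eq_mul_div, le_div_iff₀' hw] at hmvt
    nlinarith [ht.2]
  nlinarith [abs_sub_abs_le_abs_sub (F t x) (F a x), hC₀ a rfl x]

end DecaysUniformlyOn

theorem integral_eq_of_hasDerivWithinAt_of_integral_eq_zero {α E : Type*} [MeasurableSpace α]
    {μ : Measure α} [NormedAddCommGroup E] [NormedSpace ℝ E] [CompleteSpace E]
    {F F' : ℝ → α → E} {bound bound' : α → ℝ} {a b : ℝ} (hab : a ≤ b)
    (hF : ∀ t ∈ Icc a b, ∀ x, HasDerivWithinAt (F · x) (F' t x) (Icc a b) t)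
    (hF_meas : ∀ t ∈ Icc a b, AEStronglyMeasurable (F t) μ)
    (hF'_meas : ∀ t ∈ Icc a b, AEStronglyMeasurable (F' t) μ)
    (hF_le : ∀ t ∈ Icc a b, ∀ x, ‖F t x‖ ≤ bound x) (h_bound : Integrable bound μ)
    (hF'_le : ∀ t ∈ Icc a b, ∀ x, ‖F' t x‖ ≤ bound' x) (h_bound' : Integrable bound' μ)
    (hF'_int : ∀ t ∈ Ioo a b, ∫ x, F' t x ∂μ = 0) :
    ∫ x, F a x ∂μ = ∫ x, F b x ∂μ := by
  have hcont : ContinuousOn (fun t => ∫ x, F t x ∂μ) (Icc a b) :=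
    continuousOn_of_dominated hF_meas (fun t ht => ae_of_all _ (hF_le t ht)) h_bound
      (ae_of_all _ fun x t ht => (hF t ht x).continuousWithinAt)
  have hderiv : ∀ t ∈ Ioo a b, HasDerivAt (fun t => ∫ x, F t x ∂μ) 0 t := by
    intro t ht
    have ht' : t ∈ Icc a b := Ioo_subset_Icc_self ht
    rw [← hF'_int t ht]
    refine (hasDerivAt_integral_of_dominated_loc_of_deriv_le (isOpen_Ioo.mem_nhds ht)
      (eventually_of_mem (Icc_mem_nhds ht.1 ht.2) hF_meas)
      (h_bound.mono' (hF_meas t ht') (ae_of_all _ (hF_le t ht'))) (hF'_meas t ht')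
      (ae_of_all _ fun x s hs => hF'_le s (Ioo_subset_Icc_self hs) x) h_bound'
      (ae_of_all _ fun x s hs => (hF s (Ioo_subset_Icc_self hs) x).hasDerivAt
        (Icc_mem_nhds hs.1 hs.2))).2
  simpa [sub_eq_zero, eq_comm] using
    intervalIntegral.integral_eq_sub_of_hasDerivAt_of_le hab hcont hderiv intervalIntegrable_const

namespace SchwartzMap

instance {E F : Type*} [NormedAddCommGroup E] [NormedSpace ℝ E] [NormedAddCommGroup F]
    [NormedSpace ℝ F] : ContinuousEvalConst 𝓢(E, F) E F where
  continuous_eval_const x :=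
    (continuous_eval_const (F := BoundedContinuousFunction E F) x).comp
      (toBoundedContinuousFunctionCLM ℝ E F).continuous

noncomputable instance {E : Type*} [NormedAddCommGroup E] [NormedSpace ℝ E] : Mul 𝓢(E, ℝ) :=
  ⟨fun f g => pairing (ContinuousLinearMap.mul ℝ ℝ) f g⟩

@[simp]
theorem mul_apply {E : Type*} [NormedAddCommGroup E] [NormedSpace ℝ E] (f g : 𝓢(E, ℝ)) (x : E) :
    (f * g) x = f x * g x :=
  rfl

@[fun_prop]
theorem continuous_deriv {F : Type*} [NormedAddCommGroup F] [NormedSpace ℝ F] (f : 𝓢(ℝ, F)) :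
    Continuous (deriv f) :=
  (derivCLM ℝ F f).continuous

theorem integral_deriv_eq_zero {F : Type*} [NormedAddCommGroup F] [NormedSpace ℝ F]
    (f : 𝓢(ℝ, F)) : ∫ x, deriv f x = 0 :=
  integral_eq_zero_of_hasDerivAt_of_integrable f.hasDerivAt (derivCLM ℝ F f).integrable
    f.integrable

theorem one_add_sq_mul_abs_le (f : 𝓢(ℝ, ℝ)) (x : ℝ) :
    (1 + x ^ 2) * |f x| ≤ SchwartzMap.seminorm ℝ 0 0 f + SchwartzMap.seminorm ℝ 2 0 f := by
  have h₀ := f.norm_le_seminorm ℝ x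
  have h₂ := f.norm_pow_mul_le_seminorm ℝ 2 x
  simp only [Real.norm_eq_abs, sq_abs] at h₀ h₂
  linarith

section DecaysUniformlyOn

variable {T : Type*} [TopologicalSpace T] {K : Set T} {f : T → 𝓢(ℝ, ℝ)}

theorem decaysUniformlyOn_of_continuousOn (hK : IsCompact K) (hf : ContinuousOn f K) :
    DecaysUniformlyOn (fun t x => f t x) K := by
  have hφ : Continuous fun g : 𝓢(ℝ, ℝ) =>
      SchwartzMap.seminorm ℝ 0 0 g + SchwartzMap.seminorm ℝ 2 0 g :=
    ((schwartz_withSeminorms ℝ ℝ ℝ).continuous_seminorm (0, 0)).add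
      ((schwartz_withSeminorms ℝ ℝ ℝ).continuous_seminorm (2, 0))
  obtain ⟨C, hC⟩ := (hK.image_of_continuousOn (hφ.comp_continuousOn hf)).bddAbove
  exact ⟨C, fun t ht x => (one_add_sq_mul_abs_le (f t) x).trans (hC (mem_image_of_mem _ ht))⟩

theorem decaysUniformlyOn_deriv_of_continuousOn (hK : IsCompact K) (hf : ContinuousOn f K) :
    DecaysUniformlyOn (fun t x => deriv (f t) x) K :=
  decaysUniformlyOn_of_continuousOn hK ((derivCLM ℝ ℝ).continuous.comp_continuousOn hf)

end DecaysUniformlyOn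

variable {a b : ℝ} {η ηt : ℝ → 𝓢(ℝ, ℝ)}

theorem deriv_apply_eq_add_integral
    (hderiv : ∀ t ∈ Icc a b, ∀ x, HasDerivWithinAt (fun s => η s x) (ηt t x) (Icc a b) t)
    (hcont : ContinuousOn ηt (Icc a b)) {s : ℝ} (hs : s ∈ Icc a b) (x : ℝ) :
    deriv (η s) x = deriv (η a) x + ∫ τ in a..s, deriv (ηt τ) x := by
  have hηt : ∀ y, ContinuousOn (fun τ => ηt τ y) (Icc a b) := fun y =>
    (continuous_eval_const y).comp_continuousOn hcont
  have hDηt : ContinuousOn (fun τ => deriv (ηt τ) x) (Icc a b) :=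
    (continuous_eval_const x).comp_continuousOn ((derivCLM ℝ ℝ).continuous.comp_continuousOn hcont)
  have hIcc : uIcc a s ⊆ Icc a b := by
    rw [uIcc_of_le hs.1]; exact Icc_subset_Icc_right hs.2
  have hIoc : uIoc a s ⊆ Icc a b := uIoc_subset_uIcc.trans hIcc
  have hFTC : ∀ y, ∫ τ in a..s, ηt τ y = η s y - η a y := fun y =>
    intervalIntegral.integral_eq_sub_of_hasDerivAt_of_le hs.1
      (fun τ hτ => (hderiv τ ⟨hτ.1, hτ.2.trans hs.2⟩ y).continuousWithinAt.mono
        (Icc_subset_Icc_right hs.2))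
      (fun τ hτ => (hderiv τ ⟨hτ.1.le, hτ.2.le.trans hs.2⟩ y).hasDerivAt
        (Icc_mem_nhds hτ.1 (hτ.2.trans_le hs.2)))
      ((hηt y).mono hIcc).intervalIntegrable
  obtain ⟨C, hC⟩ := (decaysUniformlyOn_deriv_of_continuousOn isCompact_Icc hcont).exists_abs_le
  have hdiff : HasDerivAt (fun y => ∫ τ in a..s, ηt τ y) (∫ τ in a..s, deriv (ηt τ) x) x :=
    (intervalIntegral.hasDerivAt_integral_of_dominated_loc_of_deriv_le (bound := fun _ => C)
      univ_mem (Eventually.of_forall fun y => ((hηt y).mono hIoc).aestronglyMeasurable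
        measurableSet_uIoc)
      ((hηt x).mono hIcc).intervalIntegrable
      ((hDηt.mono hIoc).aestronglyMeasurable measurableSet_uIoc)
      (ae_of_all _ fun τ hτ y _ => hC τ (hIoc hτ) y) intervalIntegrable_const
      (ae_of_all _ fun τ _ y _ => (ηt τ).hasDerivAt y)).2
  simp only [hFTC] at hdiff
  linarith [hdiff.unique (((η s).hasDerivAt x).sub ((η a).hasDerivAt x))]

theorem hasDerivWithinAt_deriv_apply
    (hderiv : ∀ t ∈ Icc a b, ∀ x, HasDerivWithinAt (fun s => η s x) (ηt t x) (Icc a b) t)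
    (hcont : ContinuousOn ηt (Icc a b)) {t : ℝ} (ht : t ∈ Icc a b) (x : ℝ) :
    HasDerivWithinAt (fun s => deriv (η s) x) (deriv (ηt t) x) (Icc a b) t := by
  have hDηt : ContinuousOn (fun τ => deriv (ηt τ) x) (Icc a b) :=
    (continuous_eval_const x).comp_continuousOn ((derivCLM ℝ ℝ).continuous.comp_continuousOn hcont)
  have hIcc : uIcc a t ⊆ Icc a b := by
    rw [uIcc_of_le ht.1]; exact Icc_subset_Icc_right ht.2
  have : Fact (t ∈ Icc a b) := ⟨ht⟩
  exact ((intervalIntegral.integral_hasDerivWithinAt_right (hDηt.mono hIcc).intervalIntegrable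
    (hDηt.stronglyMeasurableAtFilter_nhdsWithin measurableSet_Icc t) (hDηt t ht)).const_add _).congr
    (fun s hs => deriv_apply_eq_add_integral hderiv hcont hs x)
    (deriv_apply_eq_add_integral hderiv hcont ht x)

end SchwartzMap

/-- The flux in the divergence form of the conservation law, evaluated on the jet
`u = η, u₁ = ∂ₓη, u₂ = ∂ₓ²η, v = ∂ₜη`. -/
noncomputable def kdvThirdFlux (ε u u₁ u₂ v : ℝ) : ℝ :=
  u ^ 3 + 9 / 8 * ε * u ^ 4 + 2 / 3 * u₁ * v + 1 / 3 * u₁ ^ 2 + 1 / 18 * ε * u₂ ^ 2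
    + 1 / 2 * ε * u ^ 2 * u₂

theorem hasDerivAt_kdvThirdFlux {ε : ℝ} {u u₁ u₂ v : ℝ → ℝ} {u₃ v₁ x : ℝ}
    (hu : HasDerivAt u (u₁ x) x) (hu₁ : HasDerivAt u₁ (u₂ x) x) (hu₂ : HasDerivAt u₂ u₃ x)
    (hv : HasDerivAt v v₁ x)
    (hkdv : v x + u₁ x + 3 / 2 * ε * u x * u₁ x + 1 / 6 * ε * u₃ = 0) :
    HasDerivAt (fun y => kdvThirdFlux ε (u y) (u₁ y) (u₂ y) (v y))
      (2 / 3 * u₁ x * v₁ - 3 * u x ^ 2 * v x) x := by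
  refine (((((((hu.pow 3).add ((hu.pow 4).const_mul (9 / 8 * ε))).add
    ((hu₁.const_mul (2 / 3)).mul hv)).add ((hu₁.pow 2).const_mul (1 / 3))).add
    ((hu₂.pow 2).const_mul (1 / 18 * ε))).add
    (((hu.pow 2).const_mul (1 / 2 * ε)).mul hu₂))).congr_deriv ?_
  push_cast [Pi.pow_apply]
  linear_combination (3 * u x ^ 2 + 2 / 3 * u₂ x) * hkdv

theorem integral_kdv_third_density_rate_eq_zero (ε : ℝ) (u v : 𝓢(ℝ, ℝ))
    (hkdv : ∀ x, v x + deriv u x + 3 / 2 * ε * u x * deriv u x + 1 / 6 * ε * deriv^[3] u x = 0) :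
    ∫ x, (2 / 3 * deriv u x * deriv v x - 3 * u x ^ 2 * v x) = 0 := by
  set u₁ := derivCLM ℝ ℝ u
  set u₂ := derivCLM ℝ ℝ u₁
  let Q : 𝓢(ℝ, ℝ) := u * u * u + (9 / 8 * ε) • (u * u * u * u) + (2 / 3 : ℝ) • (u₁ * v)
    + (1 / 3 : ℝ) • (u₁ * u₁) + (1 / 18 * ε) • (u₂ * u₂) + (1 / 2 * ε) • (u * u * u₂)
  have hQ : ⇑Q = fun y => kdvThirdFlux ε (u y) (u₁ y) (u₂ y) (v y) := by
    ext y
    simp only [Q, kdvThirdFlux, add_apply, smul_apply, mul_apply, smul_eq_mul]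
    ring
  rw [← Q.integral_deriv_eq_zero]
  congr 1 with x
  have h₃ : deriv^[3] u x = deriv u₂ x := by
    simp only [Function.iterate_succ_apply', Function.iterate_zero_apply]; rfl
  rw [hQ]
  refine (hasDerivAt_kdvThirdFlux (u.hasDerivAt x) (u₁.hasDerivAt x) (u₂.hasDerivAt x)
    (v.hasDerivAt x) ?_).deriv.symm
  rw [← h₃]
  exact hkdv x

theorem kdv_third_invariant_conserved_general (ε t₁ t₂ : ℝ) (ht : t₁ ≤ t₂)
    (η : ℝ → SchwartzMap ℝ ℝ) (ηt : ℝ → SchwartzMap ℝ ℝ)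
    (hderiv : ∀ t ∈ Set.Icc t₁ t₂, ∀ x : ℝ, HasDerivAt (fun s => η s x) (ηt t x) t)
    (hcont : ContinuousOn ηt (Set.Icc t₁ t₂))
    (hKdV : ∀ t ∈ Set.Icc t₁ t₂, ∀ x : ℝ,
      ηt t x + deriv (fun y => η t y) x
        + (3/2) * ε * η t x * deriv (fun y => η t y) x
        + (1/6) * ε * deriv^[3] (fun y => η t y) x = 0) :
    ∫ x : ℝ, ((1/3) * (deriv (fun y => η t₁ y) x)^2 - (η t₁ x)^3)
      = ∫ x : ℝ, ((1/3) * (deriv (fun y => η t₂ y) x)^2 - (η t₂ x)^3) := by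
  have hη' : ∀ t ∈ Icc t₁ t₂, ∀ x, HasDerivWithinAt (fun s => η s x) (ηt t x) (Icc t₁ t₂) t :=
    fun t ht x => (hderiv t ht x).hasDerivWithinAt
  have hDη' := fun t (ht : t ∈ Icc t₁ t₂) x => hasDerivWithinAt_deriv_apply hη' hcont ht x
  have hηt := decaysUniformlyOn_of_continuousOn isCompact_Icc hcont
  have hDηt := decaysUniformlyOn_deriv_of_continuousOn isCompact_Icc hcont
  have hη := DecaysUniformlyOn.of_hasDerivWithinAt hη'
    (decaysUniformlyOn_of_continuousOn isCompact_singleton (continuousOn_singleton η t₁)) hηt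
  have hDη := DecaysUniformlyOn.of_hasDerivWithinAt hDη'
    (decaysUniformlyOn_deriv_of_continuousOn isCompact_singleton (continuousOn_singleton η t₁))
    hDηt
  obtain ⟨B, hB, hFB⟩ := (((hDη.pow two_ne_zero).const_mul (1 / 3)).sub
    (hη.pow three_ne_zero)).exists_integrable_bound
  obtain ⟨B', hB', hF'B⟩ := (((hDη.const_mul (2 / 3)).mul hDηt).sub
    (((hη.pow two_ne_zero).const_mul 3).mul hηt)).exists_integrable_bound
  refine integral_eq_of_hasDerivWithinAt_of_integral_eq_zero ht (fun t ht x => ?_)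
    (fun t _ => Continuous.aestronglyMeasurable (by fun_prop))
    (fun t _ => Continuous.aestronglyMeasurable (by fun_prop)) hFB hB hF'B hB'
    (fun t ht => integral_kdv_third_density_rate_eq_zero ε (η t) (ηt t)
      (hKdV t (Ioo_subset_Icc_self ht)))
  exact ((((hDη' t ht x).pow 2).const_mul (1 / 3)).sub ((hη' t ht x).pow 3)).congr_deriv
    (by push_cast; ring)

/-- Conservation of the third classical invariant `∫ ((1/3)(∂ₓη)² − η³) dx` for
Schwartz-class solutions of the KdV equation on a time interval `[t₁, t₂]`.  The solution
is given as a curve `η : ℝ → 𝓢(ℝ, ℝ)` in Schwartz space which is continuously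
differentiable in time: its pointwise time derivative `ηt t` is again a Schwartz function
for each `t ∈ [t₁, t₂]`, and `t ↦ ηt t` is continuous into Schwartz space. -/
theorem kdv_third_invariant_conserved (ε t₁ t₂ : ℝ) (hε : 0 < ε) (ht : t₁ ≤ t₂)
    (η : ℝ → SchwartzMap ℝ ℝ) (ηt : ℝ → SchwartzMap ℝ ℝ)
    (hderiv : ∀ t ∈ Set.Icc t₁ t₂, ∀ x : ℝ, HasDerivAt (fun s => η s x) (ηt t x) t)
    (hcont : ContinuousOn ηt (Set.Icc t₁ t₂))
    (hKdV : ∀ t ∈ Set.Icc t₁ t₂, ∀ x : ℝ,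
      ηt t x + deriv (fun y => η t y) x
        + (3/2) * ε * η t x * deriv (fun y => η t y) x
        + (1/6) * ε * deriv^[3] (fun y => η t y) x = 0) :
    ∫ x : ℝ, ((1/3) * (deriv (fun y => η t₁ y) x)^2 - (η t₁ x)^3)
      = ∫ x : ℝ, ((1/3) * (deriv (fun y => η t₂ y) x)^2 - (η t₂ x)^3) :=
  kdv_third_invariant_conserved_general ε t₁ t₂ ht η ηt hderiv hcont hKdV
end
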